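/- Let 𝔡 be the least cardinality of a dominating family, i.e. of a set D ⊆ ℕ^ℕ such that for every g : ℕ → ℕ there is f ∈ D with g(n) ≤ f(n) for all but finitely many n, and let 𝔠 be the cardinality of the continuum. Then 𝔡 = 𝔠 if and only if the following holds: for every Boolean subalgebra 𝔹 of the powerset of ℕ with |𝔹| < 𝔠 and every finitely additive function μ : 𝔹 → [0,1] with μ(ℕ) = 1 which vanishes on all finite members of 𝔹, there is a free measure on all subsets of ℕ extending μ which is a P-measure. -/

import Mathlib

open Filter

/-- A finitely additive probability measure defined on all subsets of `ℕ`. -/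
def IsMeasure (μ : Set ℕ → ℝ) : Prop :=
  (∀ A : Set ℕ, 0 ≤ μ A ∧ μ A ≤ 1) ∧ μ Set.univ = 1 ∧
    ∀ A B : Set ℕ, Disjoint A B → μ (A ∪ B) = μ A + μ B

/-- A measure is free if it vanishes on finite sets. -/
def IsFree (μ : Set ℕ → ℝ) : Prop := ∀ A : Set ℕ, A.Finite → μ A = 0

/-- A function is finite-to-one if all fibers are finite. -/
def FinToOne (f : ℕ → ℕ) : Prop := ∀ n : ℕ, (f ⁻¹' {n}).Finite

/-- Rudin-Blass reducibility: `ν ≤_RB μ` via a finite-to-one map. -/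
def RBLe (ν μ : Set ℕ → ℝ) : Prop :=
  ∃ f : ℕ → ℕ, FinToOne f ∧ ∀ A : Set ℕ, μ (f ⁻¹' A) = ν A

/-- Rudin-Keisler reducibility: `ν ≤_RK μ`. -/
def RKLe (ν μ : Set ℕ → ℝ) : Prop :=
  ∃ f : ℕ → ℕ, ∀ A : Set ℕ, μ (f ⁻¹' A) = ν A

/-- A measure is shift invariant if `μ(A + 1) = μ(A)`. -/
def ShiftInvariant (μ : Set ℕ → ℝ) : Prop :=
  ∀ A : Set ℕ, μ ((fun n => n + 1) '' A) = μ A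

/-- A measure extends the asymptotic density. -/
def ExtendsDensity (μ : Set ℕ → ℝ) : Prop :=
  ∀ (A : Set ℕ) (d : ℝ),
    Tendsto (fun n : ℕ => ((A ∩ Set.Iio n).ncard : ℝ) / n) atTop (nhds d) → μ A = d

/-- A partition of `ℕ` indexed by `ℕ`. -/
def IsPartition (A : ℕ → Set ℕ) : Prop :=
  Pairwise (Function.onFun Disjoint A) ∧ (⋃ n, A n) = Set.univ

/-- A selector of a partition: meets each piece in at most one point. -/
def IsSelector (S : Set ℕ) (A : ℕ → Set ℕ) : Prop :=
  ∀ n : ℕ, (S ∩ A n).Subsingleton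

/-- A Q-measure: each partition into finite sets has a selector of full measure. -/
def IsQMeasure (μ : Set ℕ → ℝ) : Prop :=
  ∀ A : ℕ → Set ℕ, IsPartition A → (∀ n, (A n).Finite) →
    ∃ S : Set ℕ, IsSelector S A ∧ μ S = 1

/-- A Q⁺-measure: each partition into finite sets has a selector of positive measure. -/
def IsQPlusMeasure (μ : Set ℕ → ℝ) : Prop :=
  ∀ A : ℕ → Set ℕ, IsPartition A → (∀ n, (A n).Finite) →
    ∃ S : Set ℕ, IsSelector S A ∧ 0 < μ S

/-- A P-measure: each partition has a pseudo-selector of the largest possible measure. -/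
def IsPMeasure (μ : Set ℕ → ℝ) : Prop :=
  ∀ A : ℕ → Set ℕ, IsPartition A →
    ∃ S : Set ℕ, (∀ n, (S ∩ A n).Finite) ∧ μ S = 1 - ∑' n, μ (A n)

/-- A selective measure: each partition has a selector of the largest possible measure. -/
def IsSelectiveMeasure (μ : Set ℕ → ℝ) : Prop :=
  ∀ A : ℕ → Set ℕ, IsPartition A →
    ∃ S : Set ℕ, IsSelector S A ∧ μ S = 1 - ∑' n, μ (A n)

/-- A non-atomic measure: finite partitions into pieces of arbitrarily small measure. -/
def NonAtomic (μ : Set ℕ → ℝ) : Prop :=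
  ∀ ε : ℝ, 0 < ε → ∃ (N : ℕ) (P : Fin N → Set ℕ),
    Pairwise (Function.onFun Disjoint P) ∧ (⋃ i, P i) = Set.univ ∧ ∀ i, μ (P i) < ε

/-- The continuum hypothesis: `2 ^ ℵ₀ = ℵ₁`. -/
def CH : Prop := (2 : Cardinal.{0}) ^ Cardinal.aleph0.{0} = Cardinal.aleph.{0} 1


/-- A Boolean subalgebra of the powerset of `ℕ`. -/
def IsSubalgebra (B : Set (Set ℕ)) : Prop :=
  ∅ ∈ B ∧ Set.univ ∈ B ∧ (∀ A ∈ B, Aᶜ ∈ B) ∧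
    (∀ A ∈ B, ∀ C ∈ B, A ∪ C ∈ B) ∧ (∀ A ∈ B, ∀ C ∈ B, A ∩ C ∈ B)

/-- A finitely additive probability measure on a subalgebra `B` of the powerset of `ℕ`,
with values in `[0,1]`, vanishing on the finite members of `B`. -/
def IsPartialMeasure (B : Set (Set ℕ)) (μ : Set ℕ → ℝ) : Prop :=
  (∀ A ∈ B, 0 ≤ μ A ∧ μ A ≤ 1) ∧ μ Set.univ = 1 ∧
    (∀ A ∈ B, ∀ C ∈ B, Disjoint A C → μ (A ∪ C) = μ A + μ C) ∧
    (∀ A ∈ B, A.Finite → μ A = 0)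

/-- The dominating number `𝔡`: the least cardinality of a dominating family in `ℕ → ℕ`. -/
noncomputable def domNumber : Cardinal.{0} :=
  sInf { c : Cardinal.{0} | ∃ D : Set (ℕ → ℕ), Cardinal.mk ↥D = c ∧
    ∀ g : ℕ → ℕ, ∃ f ∈ D, ∀ᶠ n in atTop, g n ≤ f n }
/-!
If `𝔡 = 𝔠`, list all sequences `A : ℕ → Set ℕ` in order type `𝔠` and build an increasing chain of
finitely additive probabilities, each living on an algebra of fewer than `𝔠` sets. At the stage of
a partition `A`, extend the current measure `ρ` to all sets (Zorn's lemma with the Łoś–Marczewski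
one-step extension). For each of the fewer than `𝔠` sets `D` of the current algebra with
`ρ D > ∑ ρ (A n)`, pick points `h_D N ∈ D` outside `A 0 ∪ … ∪ A (N-1)`; a function `g` not dominated
by these `h_D` yields a set `S` meeting each `A n` finitely but meeting every such `D`. Hence the
outer measure of `S` is at least `1 - ∑ ρ (A n)`, and `S` is adjoined with that measure; freeness
gives the reverse inequality. The union of the chain is the required free P-measure.

Conversely, read `ℕ` as `ℕ × ℕ` and, for a family `D` of fewer than `𝔠` functions, take a free
ultrafilter containing every region `{(n, c) | N ≤ n ∧ f n ≤ c}`, restricted to the algebra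
generated by these regions for `f ∈ D`. A free P-measure extending it gives a set `S` of measure `1`
meeting every column finitely. The function bounding the columns of `S` is not dominated by any
`f ∈ D`: otherwise `S` would miss a region of measure `1`.
-/

open Set MeasureTheory Function
open scoped Cardinal

universe u

theorem Cardinal.mk_finset_le_max (α : Type u) : #(Finset α) ≤ max #α ℵ₀ := by
  classical
  refine (mk_le_of_surjective (f := List.toFinset) fun s => ⟨s.toList, s.toList_toFinset⟩).trans ?_
  exact (mk_list_le_max α).trans_eq (max_comm _ _)

theorem IsSubalgebra.isSetAlgebra {B : Set (Set ℕ)} (hB : IsSubalgebra B) : IsSetAlgebra B :=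
  ⟨hB.1, fun A hA => hB.2.2.1 A hA, fun A C hA hC => hB.2.2.2.1 A hA C hC⟩

theorem MeasureTheory.IsSetAlgebra.isSubalgebra {B : Set (Set ℕ)} (hB : IsSetAlgebra B) :
    IsSubalgebra B :=
  ⟨hB.empty_mem, hB.univ_mem, fun _ hA => hB.compl_mem hA, fun _ hA _ hC => hB.union_mem hA hC,
    fun _ hA _ hC => hB.inter_mem hA hC⟩

namespace MeasureTheory

theorem isSetAlgebra_univ {α : Type*} : IsSetAlgebra (univ : Set (Set α)) :=
  ⟨trivial, fun _ _ => trivial, fun _ _ _ _ => trivial⟩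

theorem IsSetAlgebra.iUnion_of_directed {α ι : Type*} [Nonempty ι] {𝒜 : ι → Set (Set α)}
    (h : ∀ i, IsSetAlgebra (𝒜 i)) (hd : Directed (· ⊆ ·) 𝒜) : IsSetAlgebra (⋃ i, 𝒜 i) where
  empty_mem := mem_iUnion.2 ⟨Classical.arbitrary ι, (h _).empty_mem⟩
  compl_mem := by
    simp only [mem_iUnion]
    rintro s ⟨i, hs⟩
    exact ⟨i, (h i).compl_mem hs⟩
  union_mem := by
    simp only [mem_iUnion]
    rintro s t ⟨i, hs⟩ ⟨j, ht⟩
    obtain ⟨k, hik, hjk⟩ := hd i j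
    exact ⟨k, (h k).union_mem (hik hs) (hjk ht)⟩

open Cardinal in
theorem mk_generateSetAlgebra_le {α : Type u} (𝒜 : Set (Set α)) :
    #(generateSetAlgebra 𝒜) ≤ max #𝒜 ℵ₀ := by
  -- the algebra generated by `𝒜` is the directed union of those generated by its finite parts
  set G : Finset 𝒜 → Set (Set α) := fun t => generateSetAlgebra (Subtype.val '' (t : Set 𝒜))
  have hG : Monotone G := fun t t' h =>
    generateSetAlgebra_mono (image_mono (Finset.coe_subset.2 h))
  have hsub : generateSetAlgebra 𝒜 ⊆ ⋃ t, G t := by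
    refine (IsSetAlgebra.iUnion_of_directed (fun t => isSetAlgebra_generateSetAlgebra)
      hG.directed_le).generateSetAlgebra_subset fun A hA => mem_iUnion.2 ⟨{⟨A, hA⟩}, ?_⟩
    exact self_subset_generateSetAlgebra ⟨⟨A, hA⟩, by simp, rfl⟩
  calc #(generateSetAlgebra 𝒜) ≤ #(Finset 𝒜) * ⨆ t, #(G t) :=
        (mk_le_mk_of_subset hsub).trans (mk_iUnion_le G)
    _ ≤ max #𝒜 ℵ₀ * ℵ₀ := mul_le_mul' (mk_finset_le_max 𝒜) (ciSup_le' fun t =>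
        (countable_generateSetAlgebra ((t.finite_toSet.image _).countable)).le_aleph0)
    _ = max #𝒜 ℵ₀ := by rw [mul_eq_max (le_max_right _ _) le_rfl, max_eq_left (le_max_right _ _)]

end MeasureTheory

structure IsProbOn {α : Type*} (𝒜 : Set (Set α)) (m : Set α → ℝ) : Prop where
  nonneg : ∀ A ∈ 𝒜, 0 ≤ m A
  univ_eq : m univ = 1
  add : ∀ A ∈ 𝒜, ∀ C ∈ 𝒜, Disjoint A C → m (A ∪ C) = m A + m C

namespace IsProbOn

variable {α : Type*} {𝒜 : Set (Set α)} {m : Set α → ℝ} {A C : Set α}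

theorem inter_add_sdiff (hm : IsProbOn 𝒜 m) (h𝒜 : IsSetAlgebra 𝒜) (hA : A ∈ 𝒜) (hC : C ∈ 𝒜) :
    m (A ∩ C) + m (A \ C) = m A := by
  rw [← hm.add _ (h𝒜.inter_mem hA hC) _ (h𝒜.sdiff_mem hA hC) disjoint_sdiff_inter.symm,
    inter_union_sdiff]

theorem empty (hm : IsProbOn 𝒜 m) (h𝒜 : IsSetAlgebra 𝒜) : m ∅ = 0 := by
  have := hm.add _ h𝒜.empty_mem _ h𝒜.empty_mem (disjoint_empty _)
  rw [empty_union] at this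
  linarith

theorem mono (hm : IsProbOn 𝒜 m) (h𝒜 : IsSetAlgebra 𝒜) (hA : A ∈ 𝒜) (hC : C ∈ 𝒜)
    (h : A ⊆ C) : m A ≤ m C := by
  have := hm.inter_add_sdiff h𝒜 hC hA
  rw [inter_eq_right.2 h] at this
  linarith [hm.nonneg _ (h𝒜.sdiff_mem hC hA)]

theorem le_one (hm : IsProbOn 𝒜 m) (h𝒜 : IsSetAlgebra 𝒜) (hA : A ∈ 𝒜) : m A ≤ 1 :=
  hm.univ_eq ▸ hm.mono h𝒜 hA h𝒜.univ_mem (subset_univ A)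

theorem compl (hm : IsProbOn 𝒜 m) (h𝒜 : IsSetAlgebra 𝒜) (hA : A ∈ 𝒜) : m Aᶜ = 1 - m A := by
  have := hm.add _ hA _ (h𝒜.compl_mem hA) disjoint_compl_right
  rw [union_compl_self, hm.univ_eq] at this
  linarith

theorem union_le (hm : IsProbOn 𝒜 m) (h𝒜 : IsSetAlgebra 𝒜) (hA : A ∈ 𝒜) (hC : C ∈ 𝒜) :
    m (A ∪ C) ≤ m A + m C := by
  rw [← union_sdiff_self, hm.add _ hA _ (h𝒜.sdiff_mem hC hA) disjoint_sdiff_right]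
  linarith [hm.mono h𝒜 (h𝒜.sdiff_mem hC hA) hC sdiff_subset]

theorem isMeasure {ν : Set ℕ → ℝ} (hν : IsProbOn univ ν) : IsMeasure ν :=
  ⟨fun A => ⟨hν.nonneg A trivial, hν.le_one isSetAlgebra_univ trivial⟩, hν.univ_eq,
    fun A C => hν.add A trivial C trivial⟩

end IsProbOn

namespace IsMeasure

variable {ν : Set ℕ → ℝ} {A C : Set ℕ}

theorem isProbOn (hν : IsMeasure ν) (𝒜 : Set (Set ℕ)) : IsProbOn 𝒜 ν :=
  ⟨fun A _ => (hν.1 A).1, hν.2.1, fun A _ C _ => hν.2.2 A C⟩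

theorem empty (hν : IsMeasure ν) : ν ∅ = 0 :=
  (hν.isProbOn univ).empty isSetAlgebra_univ

theorem mono (hν : IsMeasure ν) (h : A ⊆ C) : ν A ≤ ν C :=
  (hν.isProbOn univ).mono isSetAlgebra_univ trivial trivial h

theorem compl (hν : IsMeasure ν) (A : Set ℕ) : ν Aᶜ = 1 - ν A :=
  (hν.isProbOn univ).compl isSetAlgebra_univ trivial

theorem union_le (hν : IsMeasure ν) (A C : Set ℕ) : ν (A ∪ C) ≤ ν A + ν C :=
  (hν.isProbOn univ).union_le isSetAlgebra_univ trivial trivial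

end IsMeasure

structure PartialProb (α : Type*) where
  dom : Set (Set α)
  val : Set α → ℝ
  isSetAlgebra : IsSetAlgebra dom
  isProbOn : IsProbOn dom val

namespace PartialProb

variable {α : Type*}

instance : Preorder (PartialProb α) where
  le p q := p.dom ⊆ q.dom ∧ EqOn q.val p.val p.dom
  le_refl _ := ⟨subset_rfl, fun _ _ => rfl⟩
  le_trans _ _ _ hpq hqr := ⟨hpq.1.trans hqr.1, fun _ hA => (hqr.2 (hpq.1 hA)).trans (hpq.2 hA)⟩

def ofIsMeasure {𝒜 : Set (Set ℕ)} (h𝒜 : IsSetAlgebra 𝒜) {ν : Set ℕ → ℝ} (hν : IsMeasure ν) :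
    PartialProb ℕ :=
  ⟨𝒜, ν, h𝒜, hν.isProbOn 𝒜⟩

theorem exists_le_of_directed {ι : Type*} [Nonempty ι] (F : ι → PartialProb α)
    (hF : Directed (· ≤ ·) F) : ∃ p : PartialProb α, p.dom = ⋃ i, (F i).dom ∧ ∀ i, F i ≤ p := by
  classical
  have agree : ∀ i j A, A ∈ (F i).dom → A ∈ (F j).dom → (F i).val A = (F j).val A := by
    intro i j A hi hj
    obtain ⟨k, hik, hjk⟩ := hF i j
    rw [← hik.2 hi, ← hjk.2 hj]
  set v : Set α → ℝ := fun A => if h : ∃ i, A ∈ (F i).dom then (F h.choose).val A else 0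
  have hv : ∀ i, EqOn v (F i).val (F i).dom := fun i A hA => by
    have h : ∃ i, A ∈ (F i).dom := ⟨i, hA⟩
    simp only [v, dif_pos h]
    exact agree _ _ _ h.choose_spec hA
  have hdom : IsSetAlgebra (⋃ i, (F i).dom) := IsSetAlgebra.iUnion_of_directed
    (fun i => (F i).isSetAlgebra) fun i j => (hF i j).imp fun _ h => ⟨h.1.1, h.2.1⟩
  refine ⟨⟨_, v, hdom, ⟨?_, ?_, ?_⟩⟩, rfl, fun i => ⟨subset_iUnion (fun i => (F i).dom) i, hv i⟩⟩
  · intro A hA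
    obtain ⟨i, hA⟩ := mem_iUnion.1 hA
    rw [hv i hA]
    exact (F i).isProbOn.nonneg A hA
  · obtain ⟨i⟩ := ‹Nonempty ι›
    rw [hv i (F i).isSetAlgebra.univ_mem]
    exact (F i).isProbOn.univ_eq
  · intro A hA C hC hAC
    obtain ⟨i, hA⟩ := mem_iUnion.1 hA
    obtain ⟨j, hC⟩ := mem_iUnion.1 hC
    obtain ⟨k, hik, hjk⟩ := hF i j
    have hA := hik.1 hA
    have hC := hjk.1 hC
    rw [hv k hA, hv k hC, hv k ((F k).isSetAlgebra.union_mem hA hC)]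
    exact (F k).isProbOn.add A hA C hC hAC

variable (p : PartialProb α) {X Y Y' C D E : Set α} {r : ℝ}

noncomputable def outer (X : Set α) : ℝ := sInf (p.val '' {D | D ∈ p.dom ∧ X ⊆ D})

noncomputable def inner (X : Set α) : ℝ := sSup (p.val '' {E | E ∈ p.dom ∧ E ⊆ X})

theorem outer_le (hD : D ∈ p.dom) (h : X ⊆ D) : p.outer X ≤ p.val D :=
  csInf_le ⟨0, by rintro _ ⟨D, hD, rfl⟩; exact p.isProbOn.nonneg D hD.1⟩ ⟨D, ⟨hD, h⟩, rfl⟩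

theorem le_outer (h : ∀ D ∈ p.dom, X ⊆ D → r ≤ p.val D) : r ≤ p.outer X :=
  le_csInf ⟨_, univ, ⟨p.isSetAlgebra.univ_mem, subset_univ X⟩, rfl⟩
    (by rintro _ ⟨D, hD, rfl⟩; exact h D hD.1 hD.2)

theorem le_inner (hE : E ∈ p.dom) (h : E ⊆ X) : p.val E ≤ p.inner X :=
  le_csSup ⟨1, by rintro _ ⟨E, hE, rfl⟩; exact p.isProbOn.le_one p.isSetAlgebra hE.1⟩
    ⟨E, ⟨hE, h⟩, rfl⟩

theorem inner_le (h : ∀ E ∈ p.dom, E ⊆ X → p.val E ≤ r) : p.inner X ≤ r :=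
  csSup_le ⟨_, ∅, ⟨p.isSetAlgebra.empty_mem, empty_subset X⟩, rfl⟩
    (by rintro _ ⟨E, hE, rfl⟩; exact h E hE.1 hE.2)

theorem outer_nonneg (X : Set α) : 0 ≤ p.outer X :=
  p.le_outer fun D hD _ => p.isProbOn.nonneg D hD

theorem inner_nonneg (X : Set α) : 0 ≤ p.inner X :=
  p.isProbOn.empty p.isSetAlgebra ▸ p.le_inner p.isSetAlgebra.empty_mem (empty_subset X)

theorem inner_empty : p.inner ∅ = 0 :=
  (p.inner_le fun _ _ hE => (subset_empty_iff.1 hE ▸ p.isProbOn.empty p.isSetAlgebra).le).antisymm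
    (p.inner_nonneg ∅)

theorem outer_add_inner (hC : C ∈ p.dom) (hX : X ⊆ C) : p.outer X + p.inner (C \ X) = p.val C := by
  have h₁ : p.inner (C \ X) ≤ p.val C - p.outer X := p.inner_le fun E hE hEX => by
    have hCE := p.outer_le (p.isSetAlgebra.sdiff_mem hC hE)
      fun x hx => ⟨hX hx, fun hxE => (hEX hxE).2 hx⟩
    have := p.isProbOn.inter_add_sdiff p.isSetAlgebra hC hE
    rw [inter_eq_right.2 (hEX.trans sdiff_subset)] at this
    linarith
  have h₂ : p.val C - p.inner (C \ X) ≤ p.outer X := p.le_outer fun D hD hXD => by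
    have := p.le_inner (p.isSetAlgebra.sdiff_mem hC hD) (sdiff_subset_sdiff_right hXD)
    have := p.isProbOn.mono p.isSetAlgebra (p.isSetAlgebra.inter_mem hC hD) hD inter_subset_right
    linarith [p.isProbOn.inter_add_sdiff p.isSetAlgebra hC hD]
  linarith

theorem outer_union (hC : C ∈ p.dom) (hY : Y ⊆ C) (hY' : Disjoint Y' C) :
    p.outer (Y ∪ Y') = p.outer Y + p.outer Y' := by
  have hdom := p.isSetAlgebra
  have hm := p.isProbOn
  apply le_antisymm
  · have key : ∀ D ∈ p.dom, Y ⊆ D → ∀ D' ∈ p.dom, Y' ⊆ D' →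
        p.outer (Y ∪ Y') ≤ p.val D + p.val D' := fun D hD hYD D' hD' hYD' =>
      calc p.outer (Y ∪ Y') ≤ p.val (D ∩ C ∪ D' \ C) :=
            p.outer_le (hdom.union_mem (hdom.inter_mem hD hC) (hdom.sdiff_mem hD' hC))
              (union_subset_union (subset_inter hYD hY) (subset_sdiff.2 ⟨hYD', hY'⟩))
        _ = p.val (D ∩ C) + p.val (D' \ C) := hm.add _ (hdom.inter_mem hD hC) _
            (hdom.sdiff_mem hD' hC) (disjoint_sdiff_right.mono_left inter_subset_right)
        _ ≤ p.val D + p.val D' := add_le_add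
            (hm.mono hdom (hdom.inter_mem hD hC) hD inter_subset_left)
            (hm.mono hdom (hdom.sdiff_mem hD' hC) hD' sdiff_subset)
    have : p.outer (Y ∪ Y') - p.outer Y ≤ p.outer Y' := p.le_outer fun D' hD' hYD' => by
      have : p.outer (Y ∪ Y') - p.val D' ≤ p.outer Y := p.le_outer fun D hD hYD => by
        linarith [key D hD hYD D' hD' hYD']
      linarith
    linarith
  · exact p.le_outer fun D hD hYD => by
      have h₁ := p.outer_le (hdom.inter_mem hD hC) (subset_inter (subset_union_left.trans hYD) hY)
      have h₂ := p.outer_le (hdom.sdiff_mem hD hC)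
        (subset_sdiff.2 ⟨subset_union_right.trans hYD, hY'⟩)
      linarith [hm.inter_add_sdiff hdom hD hC]

theorem inner_union (hC : C ∈ p.dom) (hY : Y ⊆ C) (hY' : Disjoint Y' C) :
    p.inner (Y ∪ Y') = p.inner Y + p.inner Y' := by
  have hdom := p.isSetAlgebra
  have hm := p.isProbOn
  apply le_antisymm
  · exact p.inner_le fun E hE hEY => by
      have h₁ := p.le_inner (hdom.inter_mem hE hC) fun x hx =>
        (hEY hx.1).resolve_right fun h => disjoint_left.1 hY' h hx.2
      have h₂ := p.le_inner (hdom.sdiff_mem hE hC) fun x hx =>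
        (hEY hx.1).resolve_left fun h => hx.2 (hY h)
      linarith [hm.inter_add_sdiff hdom hE hC]
  · have key : ∀ E ∈ p.dom, E ⊆ Y → ∀ E' ∈ p.dom, E' ⊆ Y' →
        p.val E + p.val E' ≤ p.inner (Y ∪ Y') := fun E hE hEY E' hE' hEY' => by
      rw [← hm.add _ hE _ hE' ((hY'.mono_left hEY').symm.mono_left (hEY.trans hY))]
      exact p.le_inner (hdom.union_mem hE hE') (union_subset_union hEY hEY')
    have : p.inner Y' ≤ p.inner (Y ∪ Y') - p.inner Y := p.inner_le fun E' hE' hEY' => by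
      have : p.inner Y ≤ p.inner (Y ∪ Y') - p.val E' := p.inner_le fun E hE hEY => by
        linarith [key E hE hEY E' hE' hEY']
      linarith
    linarith

variable (X)

def adjoinDom : Set (Set α) := {Y | ∃ C ∈ p.dom, ∃ C' ∈ p.dom, Y = X.ite C C'}

theorem isSetAlgebra_adjoinDom : IsSetAlgebra (p.adjoinDom X) where
  empty_mem := ⟨∅, p.isSetAlgebra.empty_mem, ∅, p.isSetAlgebra.empty_mem, (ite_same X ∅).symm⟩
  compl_mem := by
    rintro _ ⟨C, hC, C', hC', rfl⟩
    refine ⟨Cᶜ, p.isSetAlgebra.compl_mem hC, C'ᶜ, p.isSetAlgebra.compl_mem hC', ?_⟩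
    ext x
    by_cases hx : x ∈ X <;> simp [Set.ite, hx]
  union_mem := by
    rintro _ _ ⟨C, hC, C', hC', rfl⟩ ⟨D, hD, D', hD', rfl⟩
    refine ⟨C ∪ D, p.isSetAlgebra.union_mem hC hD, C' ∪ D', p.isSetAlgebra.union_mem hC' hD', ?_⟩
    ext x
    by_cases hx : x ∈ X <;> simp [Set.ite, hx]

/-- The Łoś–Marczewski extension: outer measure inside `X`, inner measure outside `X`. -/
theorem isProbOn_adjoin :
    IsProbOn (p.adjoinDom X) fun Y => p.outer (Y ∩ X) + p.inner (Y \ X) where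
  nonneg Y _ := add_nonneg (p.outer_nonneg _) (p.inner_nonneg _)
  univ_eq := by
    rw [univ_inter, p.outer_add_inner p.isSetAlgebra.univ_mem (subset_univ X)]
    exact p.isProbOn.univ_eq
  add := by
    rintro _ ⟨C, hC, C', hC', rfl⟩ _ ⟨D, -, D', -, rfl⟩ hdisj
    have hin : Disjoint (X.ite D D' ∩ X) C := disjoint_left.2 fun x hx hxC =>
      disjoint_left.1 hdisj (Or.inl ⟨hxC, hx.2⟩ : x ∈ X.ite C C') hx.1
    have hout : Disjoint (X.ite D D' \ X) C' := disjoint_left.2 fun x hx hxC =>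
      disjoint_left.1 hdisj (Or.inr ⟨hxC, hx.2⟩) hx.1
    rw [union_inter_distrib_right, union_sdiff_distrib,
      p.outer_union hC ((ite_inter_self X C C').trans_subset inter_subset_left) hin,
      p.inner_union hC' ((ite_sdiff_self X C C').trans_subset sdiff_subset) hout]
    ring

noncomputable def adjoin : PartialProb α :=
  ⟨p.adjoinDom X, _, p.isSetAlgebra_adjoinDom X, p.isProbOn_adjoin X⟩

theorem le_adjoin : p ≤ p.adjoin X := by
  refine ⟨fun C hC => ⟨C, hC, C, hC, (ite_same X C).symm⟩, fun C hC => ?_⟩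
  change p.outer (C ∩ X) + p.inner (C \ X) = p.val C
  rw [← sdiff_inter_self_eq_sdiff, inter_comm X, p.outer_add_inner hC inter_subset_left]

theorem mem_adjoin_self : X ∈ (p.adjoin X).dom :=
  ⟨univ, p.isSetAlgebra.univ_mem, ∅, p.isSetAlgebra.empty_mem, by simp [Set.ite]⟩

theorem adjoin_val_self : (p.adjoin X).val X = p.outer X := by
  change p.outer (X ∩ X) + p.inner (X \ X) = p.outer X
  rw [inter_self, sdiff_self, p.inner_empty, add_zero]

theorem exists_le_dom_eq_univ : ∃ q, p ≤ q ∧ q.dom = univ := by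
  have hchain (c : Set (PartialProb α)) (hc : IsChain (· ≤ ·) c) (y : PartialProb α) (hy : y ∈ c) :
      ∃ ub, ∀ z ∈ c, z ≤ ub := by
    have : Nonempty c := ⟨⟨y, hy⟩⟩
    obtain ⟨r, -, hr⟩ := exists_le_of_directed _ (directedOn_iff_directed.1 hc.directedOn)
    exact ⟨r, fun z hz => hr ⟨z, hz⟩⟩
  obtain ⟨q, hpq, hq⟩ := zorn_le_nonempty_Ici₀ p (fun c _ => hchain c) p le_rfl
  exact ⟨q, hpq, eq_univ_of_forall fun X => (hq (q.le_adjoin X)).1 (q.mem_adjoin_self X)⟩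

end PartialProb

theorem PartialProb.exists_isMeasure (p : PartialProb ℕ) :
    ∃ ν, IsMeasure ν ∧ EqOn ν p.val p.dom := by
  obtain ⟨q, hpq, hq⟩ := p.exists_le_dom_eq_univ
  exact ⟨q.val, IsProbOn.isMeasure (hq ▸ q.isProbOn), hpq.2⟩

namespace IsMeasure

variable {ν : Set ℕ → ℝ} {A : ℕ → Set ℕ}

theorem isFree_of_singleton (hν : IsMeasure ν) (h : ∀ n, ν {n} = 0) : IsFree ν := by
  intro F hF
  induction F, hF using Set.Finite.induction_on with
  | empty => exact hν.empty
  | @insert n F hnF _ ih =>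
    rw [insert_eq, hν.2.2 _ _ (disjoint_singleton_left.2 hnF), h n, ih, add_zero]

theorem biUnion_lt (hν : IsMeasure ν) (hA : Pairwise (Disjoint on A)) (N : ℕ) :
    ν (⋃ n < N, A n) = ∑ n ∈ Finset.range N, ν (A n) := by
  induction N with
  | zero => simp [hν.empty]
  | succ N ih =>
    rw [biUnion_lt_succ, hν.2.2 _ _ (disjoint_iUnion₂_left.2 fun n hn => hA hn.ne), ih,
      Finset.sum_range_succ]

theorem summable (hν : IsMeasure ν) (hA : Pairwise (Disjoint on A)) : Summable fun n => ν (A n) :=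
  summable_of_sum_range_le (fun _ => (hν.1 _).1) fun N => hν.biUnion_lt hA N ▸ (hν.1 _).2

theorem le_one_sub_tsum (hν : IsMeasure ν) (hfree : IsFree ν) (hA : Pairwise (Disjoint on A))
    {S : Set ℕ} (hS : ∀ n, (S ∩ A n).Finite) : ν S ≤ 1 - ∑' n, ν (A n) := by
  refine ge_of_tendsto' ((hν.summable hA).hasSum.tendsto_sum_nat.const_sub 1) fun N => ?_
  have hfin : (S ∩ ⋃ n < N, A n).Finite := by
    rw [inter_iUnion₂]
    exact (finite_lt_nat N).biUnion fun n _ => hS n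
  calc ν S ≤ ν ((⋃ n < N, A n)ᶜ ∪ (S ∩ ⋃ n < N, A n)) :=
        hν.mono fun k hk => (em (k ∈ ⋃ n < N, A n)).elim (fun h => Or.inr ⟨hk, h⟩) Or.inl
    _ ≤ ν (⋃ n < N, A n)ᶜ + ν (S ∩ ⋃ n < N, A n) := hν.union_le _ _
    _ = 1 - ∑ n ∈ Finset.range N, ν (A n) := by
      rw [hν.compl, hν.biUnion_lt hA, hfree _ hfin, add_zero]

end IsMeasure

namespace PartialProb

def VanishesOnFinite {α : Type*} (p : PartialProb α) : Prop := ∀ F ∈ p.dom, F.Finite → p.val F = 0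

theorem VanishesOnFinite.adjoin {α : Type*} {p : PartialProb α} (hp : p.VanishesOnFinite)
    {X : Set α} (hX : Xᶜ.Finite) : (p.adjoin X).VanishesOnFinite := by
  rintro _ ⟨C, hC, C', -, rfl⟩ hF
  change p.outer (X.ite C C' ∩ X) + p.inner (X.ite C C' \ X) = 0
  have hCX : C ∩ X ⊆ X.ite C C' := (ite_inter_self X C C').symm.trans_subset inter_subset_left
  -- `C ∩ X` is finite and `X` is cofinite, so `C` itself is finite
  have hC0 : p.val C = 0 := hp C hC (((hF.subset hCX).union hX).subset fun x hx =>
    (em (x ∈ X)).imp (fun h => ⟨hx, h⟩) id)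
  have h₁ : p.outer (X.ite C C' ∩ X) ≤ 0 :=
    hC0 ▸ p.outer_le hC ((ite_inter_self X C C').trans_subset inter_subset_left)
  have h₂ : p.inner (X.ite C C' \ X) ≤ 0 :=
    p.inner_le fun E hE hEX => (hp E hE (hF.subset (hEX.trans sdiff_subset))).le
  linarith [p.outer_nonneg (X.ite C C' ∩ X), p.inner_nonneg (X.ite C C' \ X)]

end PartialProb

theorem IsPartialMeasure.exists_isMeasure_isFree {B : Set (Set ℕ)} {μ : Set ℕ → ℝ}
    (hB : IsSubalgebra B) (hμ : IsPartialMeasure B μ) :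
    ∃ ν, IsMeasure ν ∧ IsFree ν ∧ EqOn ν μ B := by
  let p₀ : PartialProb ℕ :=
    ⟨B, μ, hB.isSetAlgebra, ⟨fun A hA => (hμ.1 A hA).1, hμ.2.1, hμ.2.2.1⟩⟩
  -- adjoin `{0}ᶜ, {1}ᶜ, …` in turn: every singleton enters the domain, with value `0`
  let q : ℕ → PartialProb ℕ := fun n => Nat.rec p₀ (fun k qk => qk.adjoin {k}ᶜ) n
  have hq : Monotone q := monotone_nat_of_le_succ fun n => (q n).le_adjoin _
  have hvan : ∀ n, (q n).VanishesOnFinite := by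
    intro n
    induction n with
    | zero => exact hμ.2.2.2
    | succ n ih => exact ih.adjoin (by simp)
  obtain ⟨r, -, hqr⟩ := PartialProb.exists_le_of_directed q hq.directed_le
  obtain ⟨ν, hν, hνr⟩ := r.exists_isMeasure
  have hνq : ∀ n, EqOn ν (q n).val (q n).dom := fun n _ hA =>
    (hνr ((hqr n).1 hA)).trans ((hqr n).2 hA)
  refine ⟨ν, hν, hν.isFree_of_singleton fun n => ?_, hνq 0⟩
  have hn : {n} ∈ (q (n + 1)).dom := by
    simpa using (q (n + 1)).isSetAlgebra.compl_mem ((q n).mem_adjoin_self {n}ᶜ)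
  rw [hνq (n + 1) hn]
  exact hvan (n + 1) _ hn (finite_singleton n)

section Dominating

open Cardinal

theorem domNumber_le_continuum : domNumber ≤ 𝔠 :=
  csInf_le' ⟨univ, by simp, fun g => ⟨g, trivial, .of_forall fun _ => le_rfl⟩⟩

theorem domNumber_eq_continuum_iff : domNumber = 𝔠 ↔
    ∀ D : Set (ℕ → ℕ), #D < 𝔠 → ∃ g : ℕ → ℕ, ∀ f ∈ D, ¬∀ᶠ n in atTop, g n ≤ f n := by
  refine ⟨fun h D hD => ?_, fun h => domNumber_le_continuum.antisymm ?_⟩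
  · by_contra! hdom
    exact hD.not_ge (h ▸ csInf_le' ⟨D, rfl, hdom⟩)
  · refine le_csInf ⟨_, univ, rfl, fun g => ⟨g, trivial, .of_forall fun _ => le_rfl⟩⟩ ?_
    rintro _ ⟨D, rfl, hD⟩
    by_contra! hlt
    obtain ⟨g, hg⟩ := h D hlt
    obtain ⟨f, hf, hgf⟩ := hD g
    exact hg f hf hgf

theorem exists_pseudoSelector_hitting (hd : domNumber = 𝔠) {ρ : Set ℕ → ℝ} (hρ : IsMeasure ρ)
    {𝒜 : Set (Set ℕ)} (h𝒜 : #𝒜 < 𝔠) {A : ℕ → Set ℕ} (hA : Pairwise (Disjoint on A)) :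
    ∃ S : Set ℕ, (∀ n, (S ∩ A n).Finite) ∧
      ∀ D ∈ 𝒜, ∑' n, ρ (A n) < ρ D → (S ∩ D).Nonempty := by
  have hout (D : {D ∈ 𝒜 | ∑' n, ρ (A n) < ρ D}) (N : ℕ) : ∃ k ∈ D.1, ∀ n < N, k ∉ A n := by
    obtain ⟨D, -, hD⟩ := D
    by_contra! h
    have : ρ D ≤ ∑ n ∈ Finset.range N, ρ (A n) :=
      (hρ.mono fun k hk => let ⟨n, hn, hkn⟩ := h k hk; mem_iUnion₂.2 ⟨n, hn, hkn⟩).trans_eq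
        (hρ.biUnion_lt hA N)
    linarith [(hρ.summable hA).sum_le_tsum (Finset.range N) fun n _ => (hρ.1 (A n)).1]
  choose h hh using hout
  obtain ⟨g, hg⟩ := domNumber_eq_continuum_iff.1 hd (range h)
    (mk_range_le.trans_lt ((mk_le_mk_of_subset (sep_subset _ _)).trans_lt h𝒜))
  -- where `g N > h D N`, the point `h D N ∈ D` lies in the set below
  refine ⟨{k | ∃ N, k < g N ∧ ∀ n < N, k ∉ A n}, fun n => ?_, fun D hD hlt => ?_⟩
  · refine ((finite_le_nat n).biUnion fun N _ => finite_Iio (g N)).subset ?_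
    rintro k ⟨⟨N, hk, hkA⟩, hn⟩
    exact mem_biUnion (not_lt.1 fun h => hkA n h hn) hk
  · obtain ⟨N, hN⟩ := (not_eventually.1 (hg _ ⟨⟨D, hD, hlt⟩, rfl⟩)).exists
    exact ⟨h ⟨D, hD, hlt⟩ N, ⟨N, not_le.1 hN, (hh _ N).2⟩, (hh ⟨D, hD, hlt⟩ N).1⟩

theorem exists_extension_pseudoSelector (hd : domNumber = 𝔠) {𝒩 : Set (Set ℕ)}
    (h𝒩 : IsSetAlgebra 𝒩) (h𝒩c : #𝒩 < 𝔠) {ρ : Set ℕ → ℝ} (hρ : IsMeasure ρ) {A : ℕ → Set ℕ}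
    (hA : Pairwise (Disjoint on A)) (hA𝒩 : ∀ n, A n ∈ 𝒩) :
    ∃ S ν, IsMeasure ν ∧ EqOn ν ρ 𝒩 ∧ (∀ n, (S ∩ A n).Finite) ∧ 1 - ∑' n, ν (A n) ≤ ν S := by
  obtain ⟨S, hS, hhit⟩ := exists_pseudoSelector_hitting hd hρ h𝒩c hA
  let p := PartialProb.ofIsMeasure h𝒩 hρ
  obtain ⟨ν, hν, hνp⟩ := (p.adjoin S).exists_isMeasure
  have hνρ : EqOn ν ρ 𝒩 := fun D hD => (hνp ((p.le_adjoin S).1 hD)).trans ((p.le_adjoin S).2 hD)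
  refine ⟨S, ν, hν, hνρ, hS, ?_⟩
  rw [tsum_congr fun n => hνρ (hA𝒩 n), hνp (p.mem_adjoin_self S), p.adjoin_val_self]
  refine p.le_outer fun D hD hSD => ?_
  have : ρ Dᶜ ≤ ∑' n, ρ (A n) := not_lt.1 fun h =>
    inter_compl_nonempty_iff.1 (hhit _ (h𝒩.compl_mem hD) h) hSD
  change _ ≤ ρ D
  linarith [hρ.compl D]

end Dominating

theorem WellFoundedLT.exists_forall_of_step {I β : Type*} [LT I] [WellFoundedLT I] [Nonempty β]
    (P : (I → β) → I → β → Prop) (hP : ∀ g g' i b, (∀ j < i, g j = g' j) → P g i b → P g' i b)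
    (step : ∀ g i, (∀ j < i, P g j (g j)) → ∃ b, P g i b) : ∃ g : I → β, ∀ i, P g i (g i) := by
  classical
  let g : I → β := wellFounded_lt.fix fun i rec =>
    if h : ∃ b, P (fun j => if hj : j < i then rec j hj else Classical.arbitrary β) i b then
      h.choose
    else Classical.arbitrary β
  refine ⟨g, fun i => ?_⟩
  induction i using WellFoundedLT.induction with
  | _ i ih =>
    let g' : I → β := fun j => if j < i then g j else Classical.arbitrary β
    have hgg' : ∀ j < i, g j = g' j := fun j hj => (if_pos hj).symm
    have hex : ∃ b, P g' i b := (step g i ih).imp fun b => hP g g' i b hgg'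
    have hgi : g i = hex.choose := (wellFounded_lt.fix_eq _ i).trans (dif_pos hex)
    exact hP g' g i _ (fun j hj => (hgg' j hj).symm) (hgi ▸ hex.choose_spec)

namespace PartialProb

def HasPseudoSelector (a : PartialProb ℕ) (A : ℕ → Set ℕ) : Prop :=
  (∀ n, A n ∈ a.dom) ∧ (IsPartition A →
    ∃ S ∈ a.dom, (∀ n, (S ∩ A n).Finite) ∧ 1 - ∑' n, a.val (A n) ≤ a.val S)

open Cardinal in
theorem exists_le_hasPseudoSelector (hd : domNumber = 𝔠) (r : PartialProb ℕ) {κ : Cardinal}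
    (hκ : ℵ₀ ≤ κ) (hκc : κ < 𝔠) (hr : #r.dom ≤ κ) (A : ℕ → Set ℕ) :
    ∃ a : PartialProb ℕ, IsMeasure a.val ∧ r ≤ a ∧ #a.dom ≤ κ ∧ a.HasPseudoSelector A := by
  obtain ⟨ρ, hρ, hρr⟩ := r.exists_isMeasure
  set 𝒩 := generateSetAlgebra (r.dom ∪ range A)
  have hr𝒩 : r.dom ⊆ 𝒩 := subset_union_left.trans self_subset_generateSetAlgebra
  have hA𝒩 : ∀ n, A n ∈ 𝒩 := fun n => self_subset_generateSetAlgebra (Or.inr ⟨n, rfl⟩)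
  have h𝒩 : #𝒩 ≤ κ := (mk_generateSetAlgebra_le _).trans <| max_le
    ((mk_union_le _ _).trans (add_le_of_le hκ hr (mk_range_le.trans (mk_nat.trans_le hκ)))) hκ
  obtain ⟨S, ν, hν, hνρ, hS⟩ : ∃ S ν, IsMeasure ν ∧ EqOn ν ρ 𝒩 ∧
      (IsPartition A → (∀ n, (S ∩ A n).Finite) ∧ 1 - ∑' n, ν (A n) ≤ ν S) := by
    by_cases hA : IsPartition A
    · obtain ⟨S, ν, hν, hνρ, hS⟩ := exists_extension_pseudoSelector hd
        isSetAlgebra_generateSetAlgebra (h𝒩.trans_lt hκc) hρ hA.1 hA𝒩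
      exact ⟨S, ν, hν, hνρ, fun _ => hS⟩
    · exact ⟨∅, ρ, hρ, fun _ _ => rfl, fun h => absurd h hA⟩
  have h𝒩S : 𝒩 ⊆ generateSetAlgebra (insert S 𝒩) :=
    (subset_insert S 𝒩).trans self_subset_generateSetAlgebra
  refine ⟨ofIsMeasure isSetAlgebra_generateSetAlgebra hν, hν,
    ⟨hr𝒩.trans h𝒩S, fun B hB => (hνρ (hr𝒩 hB)).trans (hρr hB)⟩, ?_,
    fun n => h𝒩S (hA𝒩 n), fun hA => ⟨S, self_subset_generateSetAlgebra (mem_insert S 𝒩), hS hA⟩⟩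
  exact (mk_generateSetAlgebra_le _).trans <| max_le
    (mk_insert_le.trans (add_le_of_le hκ h𝒩 (one_le_aleph0.trans hκ))) hκ

end PartialProb

section Construction

open Cardinal

abbrev Stage : Type := (𝔠 : Cardinal.{0}).ord.ToType

theorem mk_Iio_stage_lt (i : Stage) : #(Iio i) < 𝔠 := by
  simpa using mk_Iio_lt i (by rw [mk_ord_toType, Ordinal.type_toType])

theorem exists_monotone_stages (hd : domNumber = 𝔠) (p₀ : PartialProb ℕ) (hp₀ : #p₀.dom < 𝔠)
    (e : Stage → ℕ → Set ℕ) : ∃ g : Stage → PartialProb ℕ, Monotone g ∧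
      ∀ i, IsMeasure (g i).val ∧ p₀ ≤ g i ∧ (g i).HasPseudoSelector (e i) := by
  -- stage `i` is kept of size at most `κ i < 𝔠`; a uniform bound would fail for singular `𝔠`
  let κ : Stage → Cardinal := fun i => max (max #p₀.dom #(Iio i)) ℵ₀
  have hκ (i : Stage) : ℵ₀ ≤ κ i := le_max_right _ _
  have hκc (i : Stage) : κ i < 𝔠 :=
    max_lt (max_lt hp₀ (mk_Iio_stage_lt i)) aleph0_lt_continuum
  have hκmono : Monotone κ := fun i j hij =>
    max_le_max (max_le_max le_rfl (mk_le_mk_of_subset (Iio_subset_Iio hij))) le_rfl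
  let P (g : Stage → PartialProb ℕ) (i : Stage) (a : PartialProb ℕ) : Prop :=
    IsMeasure a.val ∧ p₀ ≤ a ∧ (∀ j < i, g j ≤ a) ∧ #a.dom ≤ κ i ∧ a.HasPseudoSelector (e i)
  have step (g : Stage → PartialProb ℕ) (i : Stage) (ih : ∀ j < i, P g j (g j)) : ∃ a, P g i a := by
    let F : WithBot (Iio i) → PartialProb ℕ := fun k => k.recBotCoe p₀ fun j => g j
    have hF : Monotone F := WithBot.monotone_iff.2 ⟨fun j k hjk => (hjk.lt_or_eq).elim
      (fun h => (ih k k.2).2.2.1 j h) (fun h => h ▸ le_rfl), fun j => (ih j j.2).2.1⟩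
    obtain ⟨r, hr, hFr⟩ := PartialProb.exists_le_of_directed F hF.directed_le
    have hFκ (k : WithBot (Iio i)) : #(F k).dom ≤ κ i := by
      induction k using WithBot.recBotCoe with
      | bot => exact (le_max_left _ _).trans (le_max_left _ _)
      | coe j => exact (ih j j.2).2.2.2.1.trans (hκmono j.2.le)
    have hrκ : #r.dom ≤ κ i := calc
      #r.dom ≤ #(WithBot (Iio i)) * ⨆ k, #(F k).dom := hr ▸ mk_iUnion_le _
      _ ≤ κ i * κ i := mul_le_mul' (mk_option.trans_le (add_le_of_le (hκ i)
          ((le_max_right _ _).trans (le_max_left _ _)) (one_le_aleph0.trans (hκ i))))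
          (ciSup_le' hFκ)
      _ = κ i := mul_eq_self (hκ i)
    obtain ⟨a, ha, hra, haκ, hsel⟩ := r.exists_le_hasPseudoSelector hd (hκ i) (hκc i) hrκ (e i)
    exact ⟨a, ha, (hFr ⊥).trans hra, fun j hj => (hFr (⟨j, hj⟩ : Iio i)).trans hra, haκ, hsel⟩
  have : Nonempty (PartialProb ℕ) := ⟨p₀⟩
  obtain ⟨g, hg⟩ := WellFoundedLT.exists_forall_of_step P
    (fun g g' i a h ha => ⟨ha.1, ha.2.1, fun j hj => h j hj ▸ ha.2.2.1 j hj, ha.2.2.2⟩) step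
  refine ⟨g, fun i j hij => ?_, fun i => ⟨(hg i).1, (hg i).2.1, (hg i).2.2.2.2⟩⟩
  rcases hij.lt_or_eq with h | rfl
  exacts [(hg j).2.2.1 i h, le_rfl]

theorem exists_isFree_isPMeasure_extension (hd : domNumber = 𝔠) {B : Set (Set ℕ)}
    {μ : Set ℕ → ℝ} (hB : IsSubalgebra B) (hBc : #B < 𝔠) (hμ : IsPartialMeasure B μ) :
    ∃ ν, IsMeasure ν ∧ IsFree ν ∧ IsPMeasure ν ∧ ∀ A ∈ B, ν A = μ A := by
  obtain ⟨ν₀, hν₀, hfree₀, hν₀μ⟩ := hμ.exists_isMeasure_isFree hB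
  -- every stage extends `p₀`, which fixes `μ` on `B` and `0` on singletons
  let p₀ :=
    PartialProb.ofIsMeasure (isSetAlgebra_generateSetAlgebra (𝒜 := B ∪ range singleton)) hν₀
  have hp₀ : #p₀.dom < 𝔠 := (mk_generateSetAlgebra_le _).trans_lt <| max_lt
    ((mk_union_le _ _).trans_lt (add_lt_of_lt aleph0_lt_continuum.le hBc
      (mk_range_le.trans_lt (mk_nat.trans_lt aleph0_lt_continuum)))) aleph0_lt_continuum
  obtain ⟨e⟩ : Nonempty (Stage ≃ (ℕ → Set ℕ)) := Cardinal.eq.1 (by simp)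
  obtain ⟨g, hg, hgood⟩ := exists_monotone_stages hd p₀ hp₀ e
  have : Nonempty Stage := ⟨e.symm fun _ => ∅⟩
  obtain ⟨r, -, hgr⟩ := PartialProb.exists_le_of_directed g hg.directed_le
  obtain ⟨ν, hν, hνr⟩ := r.exists_isMeasure
  have hνg (i : Stage) : EqOn ν (g i).val (g i).dom := fun _ hA =>
    (hνr ((hgr i).1 hA)).trans ((hgr i).2 hA)
  have hνp₀ : EqOn ν ν₀ p₀.dom := fun _ hA =>
    (hνg _ ((hgood (e.symm fun _ => ∅)).2.1.1 hA)).trans ((hgood _).2.1.2 hA)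
  have hfree : IsFree ν := hν.isFree_of_singleton fun n =>
    (hνp₀ (self_subset_generateSetAlgebra (Or.inr ⟨n, rfl⟩))).trans (hfree₀ _ (finite_singleton n))
  refine ⟨ν, hν, hfree, fun A hA => ?_,
    fun A hA => (hνp₀ (self_subset_generateSetAlgebra (Or.inl hA))).trans (hν₀μ hA)⟩
  obtain ⟨hAdom, hsel⟩ := (hgood (e.symm A)).2.2
  rw [e.apply_symm_apply] at hAdom hsel
  obtain ⟨S, hSdom, hS, hSval⟩ := hsel hA
  refine ⟨S, hS, le_antisymm (hν.le_one_sub_tsum hfree hA.1 hS) ?_⟩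
  rwa [hνg _ hSdom, tsum_congr fun n => hνg _ (hAdom n)]

end Construction

theorem IsMeasure.inter_eq_one {ν : Set ℕ → ℝ} (hν : IsMeasure ν) {X Y : Set ℕ} (hX : ν X = 1)
    (hY : ν Y = 1) : ν (X ∩ Y) = 1 := by
  have := hν.union_le Xᶜ Yᶜ
  rw [← compl_inter, hν.compl, hν.compl, hν.compl, hX, hY] at this
  linarith [(hν.1 (X ∩ Y)).2]

theorem IsMeasure.isPartialMeasure {ν : Set ℕ → ℝ} (hν : IsMeasure ν) (hfree : IsFree ν)
    (B : Set (Set ℕ)) : IsPartialMeasure B ν :=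
  ⟨fun A _ => hν.1 A, hν.2.1, fun A _ C _ => hν.2.2 A C, fun A _ => hfree A⟩

open scoped Classical in
noncomputable def ultrafilterMeasure (𝒰 : Ultrafilter ℕ) (X : Set ℕ) : ℝ := if X ∈ 𝒰 then 1 else 0

theorem isMeasure_ultrafilterMeasure (𝒰 : Ultrafilter ℕ) : IsMeasure (ultrafilterMeasure 𝒰) := by
  refine ⟨fun A => by unfold ultrafilterMeasure; split_ifs <;> norm_num, if_pos univ_mem,
    fun A C hAC => ?_⟩
  have : ¬(A ∈ 𝒰 ∧ C ∈ 𝒰) := fun h =>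
    Ultrafilter.empty_notMem (hAC.inter_eq ▸ inter_mem h.1 h.2)
  by_cases hA : A ∈ 𝒰 <;> by_cases hC : C ∈ 𝒰 <;> simp_all [ultrafilterMeasure]

theorem isFree_ultrafilterMeasure {𝒰 : Ultrafilter ℕ} (h𝒰 : (𝒰 : Filter ℕ) ≤ cofinite) :
    IsFree (ultrafilterMeasure 𝒰) := fun _ hF =>
  if_neg (Ultrafilter.compl_mem_iff_notMem.1 (h𝒰 hF.compl_mem_cofinite))

section Grid

/-! Through `Nat.unpair`, `ℕ` is read as the grid `ℕ × ℕ` of columns `k.unpair.1` and heights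
`k.unpair.2`. -/

def aboveGraph (f : ℕ → ℕ) : Set ℕ := {k | f k.unpair.1 ≤ k.unpair.2}

def columnsFrom (N : ℕ) : Set ℕ := {k | N ≤ k.unpair.1}

def column (n : ℕ) : Set ℕ := {k | k.unpair.1 = n}

theorem isPartition_column : IsPartition column :=
  ⟨fun _ _ hmn => disjoint_left.2 fun _ hm hn => hmn (hm.symm.trans hn),
    eq_univ_of_forall fun _ => mem_iUnion.2 ⟨_, rfl⟩⟩

theorem exists_ultrafilter_aboveGraph : ∃ 𝒰 : Ultrafilter ℕ,
    (∀ f N, aboveGraph f ∩ columnsFrom N ∈ 𝒰) ∧ (𝒰 : Filter ℕ) ≤ cofinite := by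
  let G : (ℕ → ℕ) × ℕ → Filter ℕ := fun p => 𝓟 (aboveGraph p.1 ∩ columnsFrom p.2)
  have hdir : Directed (· ≥ ·) G := fun p q => ⟨(p.1 ⊔ q.1, max p.2 q.2),
    principal_mono.2 fun k hk =>
      ⟨show p.1 k.unpair.1 ≤ k.unpair.2 from le_sup_left.trans hk.1,
        show p.2 ≤ k.unpair.1 from (le_max_left _ _).trans hk.2⟩,
    principal_mono.2 fun k hk =>
      ⟨show q.1 k.unpair.1 ≤ k.unpair.2 from le_sup_right.trans hk.1,
        show q.2 ≤ k.unpair.1 from (le_max_right _ _).trans hk.2⟩⟩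
  have : (⨅ p, G p).NeBot := iInf_neBot_of_directed' hdir fun p =>
    principal_neBot_iff.2 ⟨Nat.pair p.2 (p.1 p.2), by simp [aboveGraph, columnsFrom]⟩
  refine ⟨.of (⨅ p, G p), fun f N => Ultrafilter.of_le _ (mem_iInf_of_mem (f, N)
    (mem_principal_self _)), (Ultrafilter.of_le _).trans ?_⟩
  refine le_cofinite_iff_compl_singleton_mem.2 fun k =>
    mem_iInf_of_mem (fun _ => k.unpair.2 + 1, 0) (mem_principal.2 fun j hj hjk => ?_)
  rw [mem_singleton_iff.1 hjk] at hj
  exact absurd hj.1 (by simp [aboveGraph])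

open Cardinal in
theorem domNumber_eq_continuum_of_forall_extension
    (h : ∀ (B : Set (Set ℕ)) (μ : Set ℕ → ℝ), IsSubalgebra B → #B < 𝔠 → IsPartialMeasure B μ →
      ∃ ν : Set ℕ → ℝ, IsMeasure ν ∧ IsFree ν ∧ IsPMeasure ν ∧ ∀ A ∈ B, ν A = μ A) :
    domNumber = 𝔠 := by
  refine domNumber_eq_continuum_iff.2 fun D hD => ?_
  obtain ⟨𝒰, h𝒰, h𝒰cof⟩ := exists_ultrafilter_aboveGraph
  set B := generateSetAlgebra (aboveGraph '' D ∪ range columnsFrom)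
  have hBc : #B < 𝔠 := (mk_generateSetAlgebra_le _).trans_lt <| max_lt
    ((mk_union_le _ _).trans_lt (add_lt_of_lt aleph0_lt_continuum.le (mk_image_le.trans_lt hD)
      (mk_range_le.trans_lt (mk_nat.trans_lt aleph0_lt_continuum)))) aleph0_lt_continuum
  obtain ⟨ν, hν, -, hνP, hνμ⟩ := h B _ isSetAlgebra_generateSetAlgebra.isSubalgebra hBc
    ((isMeasure_ultrafilterMeasure 𝒰).isPartialMeasure (isFree_ultrafilterMeasure h𝒰cof) B)
  have hν1 {X : Set ℕ} (hXB : X ∈ B) (hX𝒰 : X ∈ 𝒰) : ν X = 1 := (hνμ X hXB).trans (if_pos hX𝒰)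
  have hcolumnsFrom (N : ℕ) : ν (columnsFrom N) = 1 := hν1
    (self_subset_generateSetAlgebra (Or.inr ⟨N, rfl⟩))
    (mem_of_superset (h𝒰 (fun _ => 0) N) inter_subset_right)
  have hcolumn (n : ℕ) : ν (column n) = 0 := by
    have := hν.mono (show column n ⊆ (columnsFrom (n + 1))ᶜ from fun k hk h => by
      simp_all [column, columnsFrom])
    rw [hν.compl, hcolumnsFrom] at this
    linarith [(hν.1 (column n)).1]
  obtain ⟨S, hS, hSν⟩ := hνP column isPartition_column
  rw [tsum_congr hcolumn, tsum_zero, sub_zero] at hSν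
  -- `g n` exceeds the heights of the finitely many points of `S` in column `n`
  refine ⟨fun n => (hS n).toFinset.sup (fun k => k.unpair.2) + 1, fun f hf hev => ?_⟩
  obtain ⟨N, hN⟩ := eventually_atTop.1 hev
  have hempty : S ∩ (aboveGraph f ∩ columnsFrom N) = ∅ := by
    refine eq_empty_of_forall_notMem fun k ⟨hkS, hkf, hkN⟩ => ?_
    have := Finset.le_sup (f := fun k => k.unpair.2) ((hS _).mem_toFinset.2 ⟨hkS, rfl⟩)
    have : (hS k.unpair.1).toFinset.sup (fun k => k.unpair.2) + 1 ≤ f k.unpair.1 := hN _ hkN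
    have : f k.unpair.1 ≤ k.unpair.2 := hkf
    omega
  have := hν.inter_eq_one hSν (hν1 (isSetAlgebra_generateSetAlgebra.inter_mem
    (self_subset_generateSetAlgebra (Or.inl ⟨f, hf, rfl⟩))
    (self_subset_generateSetAlgebra (Or.inr ⟨N, rfl⟩))) (h𝒰 f N))
  rw [hempty, hν.empty] at this
  exact zero_ne_one this

end Grid

/-- `𝔡 = 𝔠` iff every partial measure on a Boolean subalgebra of size `< 𝔠` extends
to a free P-measure on all subsets of `ℕ`. -/
theorem stmt_7 :
    domNumber = Cardinal.continuum.{0} ↔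
      ∀ (B : Set (Set ℕ)) (μ : Set ℕ → ℝ), IsSubalgebra B →
        Cardinal.mk ↥B < Cardinal.continuum.{0} → IsPartialMeasure B μ →
        ∃ ν : Set ℕ → ℝ, IsMeasure ν ∧ IsFree ν ∧ IsPMeasure ν ∧ ∀ A ∈ B, ν A = μ A :=
  ⟨fun hd _ _ hB hBc hμ => exists_isFree_isPMeasure_extension hd hB hBc hμ,
    domNumber_eq_continuum_of_forall_extension⟩
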